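/- For every integer k ≥ 4, the graph G_k constructed as follows contains no induced cycle of even length: take k disjoint copies F₁,…,F_k of the graph B_k (a triangle with a pendant path of length k attached to one triangle vertex, where the triangle of F_i has vertices a_i, b_i, c_i with a_i the attachment point, and r_i the pendant endpoint); for 2 ≤ i ≤ k, connect r_i to r_{i-1} by a path of length k and connect c_i to b_{i-1} by a path of length k+1. -/

import Mathlib

open SimpleGraph

/-- Raw vertex names for the even-hole-free construction `G_k`:
`b i`, `c i` are triangle vertices of the `i`-th copy of `B_k` (0-indexed),
`p i j` (for `0 ≤ j ≤ k`) are the vertices of the pendant path of the `i`-th copy, with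
`p i 0 = a_i` (the third triangle vertex) and `p i k = r_i`,
`rp i j` (for `0 ≤ j ≤ k-2`) are the internal vertices of the length-`k` path joining
`r_i` and `r_{i+1}`, and
`cb i j` (for `0 ≤ j ≤ k-1`) are the internal vertices of the length-`(k+1)` path joining
`c_{i+1}` and `b_i`. -/
inductive Raw : Type
  | b : ℕ → Raw
  | c : ℕ → Raw
  | p : ℕ → ℕ → Raw
  | rp : ℕ → ℕ → Raw
  | cb : ℕ → ℕ → Raw
deriving DecidableEq

/-- Validity of a raw vertex name for the construction with parameter `k`. -/
def Valid (k : ℕ) : Raw → Prop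
  | .b i => i < k
  | .c i => i < k
  | .p i j => i < k ∧ j ≤ k
  | .rp i j => i + 1 < k ∧ j + 1 < k
  | .cb i j => i + 1 < k ∧ j < k

/-- The vertex set of `G_k`. -/
def Vk (k : ℕ) : Type := {x : Raw // Valid k x}

/-- The base adjacency relation of `G_k` on raw vertex names (to be symmetrized). -/
def GkRel (k : ℕ) : Raw → Raw → Prop := fun x y =>
  (∃ i, x = .p i 0 ∧ y = .b i) ∨
  (∃ i, x = .p i 0 ∧ y = .c i) ∨
  (∃ i, x = .b i ∧ y = .c i) ∨
  (∃ i j, x = .p i j ∧ y = .p i (j + 1)) ∨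
  (∃ i, x = .p i k ∧ y = .rp i 0) ∨
  (∃ i j, x = .rp i j ∧ y = .rp i (j + 1)) ∨
  (∃ i, x = .rp i (k - 2) ∧ y = .p (i + 1) k) ∨
  (∃ i, x = .c (i + 1) ∧ y = .cb i 0) ∨
  (∃ i j, x = .cb i j ∧ y = .cb i (j + 1)) ∨
  (∃ i, x = .cb i (k - 1) ∧ y = .b i)

/-- The graph `G_k` of the even-hole-free construction: `k` copies of `B_k` (a triangle
`a_i b_i c_i` with a pendant path of length `k` from `a_i` ending at `r_i`), with `r_i`
joined to `r_{i+1}` by a path of length `k` and `c_{i+1}` joined to `b_i` by a path of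
length `k + 1`. -/
def Gk (k : ℕ) : SimpleGraph (Vk k) :=
  SimpleGraph.fromRel (fun x y => GkRel k x.val y.val)

/-- A cycle is induced (a hole, if of length at least 4) if it has no chords: every edge
of the graph between vertices of the cycle is an edge of the cycle. -/
def IsInducedCycle {V : Type*} (G : SimpleGraph V) {v : V} (cyc : G.Walk v v) : Prop :=
  cyc.IsCycle ∧ ∀ x ∈ cyc.support, ∀ y ∈ cyc.support, G.Adj x y → s(x, y) ∈ cyc.edges

/-- A walk is an isometric path if it is a path and its length equals the distance
between its end-vertices. -/
def IsometricPath {V : Type*} (G : SimpleGraph V) {u v : V} (p : G.Walk u v) : Prop :=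
  p.IsPath ∧ p.length = G.dist u v

/-!
Give every vertex of `G_k` a weight whose parity flips along every edge except the triangle
edges `a_i b_i`. The length of a cycle is then congruent mod 2 to the number of edges `a_i b_i`
it uses, so it suffices that every chordless cycle uses exactly one of them.

A chordless cycle meeting all of `a_i, b_i, c_i` is that triangle. Otherwise, let `i` be the
lowest copy it meets. It must use `a_i b_i` and leave copy `i` along both connecting paths,
`r_i → r_{i+1}` and `b_i → c_{i+1}`. It then climbs along the two families of paths in parallel,
passing each copy through `r_l` and the edge `c_l b_l`, until the first copy `t` whose vertex
`a_t` it meets. There it closes up through `c_t a_t` and the pendant path of copy `t`, so nothing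
above copy `t` is reachable any more and `a_i b_i` is the only edge of the form `a_j b_j` on it.
-/

namespace SimpleGraph

variable {V : Type*} {G : SimpleGraph V}

namespace Subgraph

structure IsChordlessCycle (H : G.Subgraph) : Prop where
  connected : H.Connected
  isInduced : H.IsInduced
  ncard_neighborSet : ∀ ⦃x⦄, x ∈ H.verts → (H.neighborSet x).ncard = 2

variable {H : G.Subgraph}

theorem Connected.mem_of_adj_closed (hH : H.Connected) {S : Set V}
    (hS : ∀ ⦃x y⦄, H.Adj x y → x ∈ S → y ∈ S) {x y : V} (hx : x ∈ H.verts)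
    (hy : y ∈ H.verts) (hxS : x ∈ S) : y ∈ S := by
  suffices ∀ a b : H.verts, H.coe.Reachable a b → a.1 ∈ S → b.1 ∈ S from
    this ⟨x, hx⟩ ⟨y, hy⟩ (hH.coe.preconnected _ _) hxS
  rintro a b ⟨W⟩
  induction W with
  | nil => exact id
  | cons hadj _ ih => exact fun ha => ih (hS hadj ha)

namespace IsChordlessCycle

variable (hH : H.IsChordlessCycle) {x y z u w : V}
include hH

theorem adj_and_adj (hx : x ∈ H.verts) (h : ∀ y, H.Adj x y → y = u ∨ y = w) :
    H.Adj x u ∧ H.Adj x w := by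
  have hpair : ({u, w} : Set V).ncard ≤ 2 :=
    (Set.ncard_insert_le _ _).trans (by rw [Set.ncard_singleton])
  have heq : H.neighborSet x = {u, w} :=
    Set.eq_of_subset_of_ncard_le (fun y hy => h y hy) (hpair.trans (hH.ncard_neighborSet hx).ge)
  exact ⟨heq.ge (Set.mem_insert u _), heq.ge (Set.mem_insert_of_mem u rfl)⟩

theorem eq_or_eq_of_adj (hu : H.Adj x u) (hw : H.Adj x w) (huw : u ≠ w) (hy : H.Adj x y) :
    y = u ∨ y = w := by
  have hx : (H.neighborSet x).ncard = 2 := hH.ncard_neighborSet hu.fst_mem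
  have heq : {u, w} = H.neighborSet x :=
    Set.eq_of_subset_of_ncard_le (Set.pair_subset hu hw) (by rw [hx, Set.ncard_pair huw])
      (Set.finite_of_ncard_pos (by omega))
  exact heq.ge hy

theorem adj_of_thread (f : ℕ → V) {n : ℕ}
    (hf : ∀ j, 0 < j → j < n → ∀ y, G.Adj (f j) y → y = f (j - 1) ∨ y = f (j + 1))
    {j : ℕ} (hj : 0 < j) (hjn : j < n) (hfj : f j ∈ H.verts) {m : ℕ} (hm : m < n) :
    H.Adj (f m) (f (m + 1)) := by
  have hstep (l : ℕ) (hl : 0 < l) (hln : l < n) (hfl : f l ∈ H.verts) :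
      H.Adj (f l) (f (l - 1)) ∧ H.Adj (f l) (f (l + 1)) :=
    hH.adj_and_adj hfl fun y hy => hf l hl hln y (H.adj_sub hy)
  have hmem (l : ℕ) (hl : 0 < l) (hln : l < n) : f l ∈ H.verts := by
    rcases le_total j l with hjl | hlj
    · induction l, hjl using Nat.le_induction with
      | base => exact hfj
      | succ l hjl ih =>
        exact (hstep l (by omega) (by omega) (ih (by omega) (by omega))).2.snd_mem
    · induction hlj using Nat.decreasingInduction with
      | self => exact hfj
      | of_succ l _ ih =>
        exact (hstep (l + 1) (by omega) (by omega) (ih (by omega) (by omega))).1.snd_mem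
  rcases Nat.eq_zero_or_pos m with rfl | hm0
  · exact (hstep 1 one_pos (by omega) (hmem 1 one_pos (by omega))).1.symm
  · exact (hstep m hm0 hm (hmem m hm0 hm)).2

theorem verts_subset_of_adj (hx : x ∈ H.verts) (hy : y ∈ H.verts) (hz : z ∈ H.verts)
    (hxy : G.Adj x y) (hyz : G.Adj y z) (hxz : G.Adj x z) : H.verts ⊆ {x, y, z} := by
  have hxy' := hH.isInduced hx hy hxy
  have hyz' := hH.isInduced hy hz hyz
  have hxz' := hH.isInduced hx hz hxz
  refine fun w hw => hH.connected.mem_of_adj_closed ?_ hx hw (Set.mem_insert x _)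
  rintro u v huv (rfl | rfl | rfl)
  · rcases hH.eq_or_eq_of_adj hxy' hxz' hyz.ne huv with rfl | rfl <;> simp
  · rcases hH.eq_or_eq_of_adj hxy'.symm hyz' hxz.ne huv with rfl | rfl <;> simp
  · rcases hH.eq_or_eq_of_adj hxz'.symm hyz'.symm hxy.ne huv with rfl | rfl <;> simp

end IsChordlessCycle

end Subgraph

theorem Walk.natCast_length_eq {u w : V} (g : V → ZMod 2) (W : G.Walk u w) :
    (W.length : ZMod 2) = g u + g w + W.darts.countP (fun d => g d.fst = g d.snd) := by
  induction W with
  | nil => simp [CharTwo.add_self_eq_zero]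
  | @cons a b c h W ih =>
    rw [Walk.length_cons, Walk.darts_cons, List.countP_cons, Nat.cast_add, Nat.cast_add, ih,
      Nat.cast_ite, Nat.cast_one, Nat.cast_zero]
    generalize g a = x, g b = y, g c = z, ((W.darts.countP _ : ℕ) : ZMod 2) = t
    revert x y z t
    decide

end SimpleGraph

theorem IsInducedCycle.map {V V' : Type*} {G : SimpleGraph V} {G' : SimpleGraph V'}
    (f : G ↪g G') {v : V} {C : G.Walk v v} (hC : IsInducedCycle G C) :
    IsInducedCycle G' (C.map f.toHom) := by
  refine ⟨(Walk.isCycle_map_iff_of_injective f.injective).mpr hC.1, ?_⟩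
  simp only [Walk.support_map, List.mem_map]
  rintro _ ⟨x, hx, rfl⟩ _ ⟨y, hy, rfl⟩ hxy
  rw [Walk.edges_map]
  exact List.mem_map_of_mem (hC.2 x hx y hy (f.map_adj_iff.mp hxy))

theorem IsInducedCycle.isChordlessCycle_toSubgraph {V : Type*} {G : SimpleGraph V} {v : V}
    {C : G.Walk v v} (hC : IsInducedCycle G C) : C.toSubgraph.IsChordlessCycle where
  connected := C.toSubgraph_connected
  isInduced x hx y hy hxy := by
    rw [Walk.mem_verts_toSubgraph] at hx hy
    exact Walk.adj_toSubgraph_iff_mem_edges.mpr (hC.2 x hx y hy hxy)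
  ncard_neighborSet x hx :=
    hC.1.ncard_neighborSet_toSubgraph_eq_two (C.mem_verts_toSubgraph.mp hx)

theorem Nat.exists_first_of_step {P Q : ℕ → Prop} {i n : ℕ} (hi : P i)
    (hstep : ∀ l, P l → ¬ Q l → P (l + 1)) (hbound : ∀ l, P l → l < n) :
    ∃ t, i ≤ t ∧ P t ∧ Q t ∧ ∀ l, i ≤ l → l < t → ¬ Q l := by
  obtain ⟨d, hd⟩ : ∃ d, n ≤ i + d := ⟨n, by omega⟩
  induction d generalizing i with
  | zero => exact absurd (hbound i hi) (by omega)
  | succ d ih =>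
    by_cases hQ : Q i
    · exact ⟨i, le_rfl, hi, hQ, fun l _ _ => by omega⟩
    · obtain ⟨t, hit, hPt, hQt, hlt⟩ := ih (hstep i hi hQ) (by omega)
      refine ⟨t, by omega, hPt, hQt, fun l hl hlt' => ?_⟩
      rcases hl.eq_or_lt with rfl | hl
      · exact hQ
      · exact hlt l hl hlt'

namespace Raw

-- `G_k` on all raw vertex names, the invalid ones being isolated; it contains `Gk k` as an
-- induced subgraph (`embedding`), which lets the combinatorics avoid the subtype `Vk k`.
def graph (k : ℕ) : SimpleGraph Raw :=
  SimpleGraph.fromRel fun x y => Valid k x ∧ Valid k y ∧ GkRel k x y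

def embedding (k : ℕ) : Gk k ↪g graph k where
  toEmbedding := Function.Embedding.subtype (Valid k)
  map_rel_iff' {x y} := by
    show (graph k).Adj x.1 y.1 ↔ (Gk k).Adj x y
    have hxy : x.1 = y.1 ↔ x = y := Subtype.ext_iff.symm
    simp [Gk, graph, hxy, x.2, y.2]

variable {k : ℕ}

theorem valid_of_adj {x y : Raw} (h : (graph k).Adj x y) : Valid k x := by
  obtain ⟨-, ⟨hx, -⟩ | ⟨-, hx, -⟩⟩ := h <;> exact hx

theorem triangle_adj {i : ℕ} (hi : i < k) :
    (graph k).Adj (.p i 0) (.b i) ∧ (graph k).Adj (.b i) (.c i) ∧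
      (graph k).Adj (.p i 0) (.c i) := by
  simp [graph, GkRel, Valid, hi]

theorem adj_a_cases {i : ℕ} {y : Raw} (h : (graph k).Adj (.p i 0) y) :
    y = .b i ∨ y = .c i ∨ y = .p i 1 := by
  cases y <;> simp [graph, GkRel, Valid] at h ⊢ <;> omega

theorem adj_b_cases {i : ℕ} {y : Raw} (h : (graph k).Adj (.b i) y) :
    y = .p i 0 ∨ y = .c i ∨ y = .cb i (k - 1) := by
  cases y <;> simp [graph, GkRel, Valid] at h ⊢ <;> omega

theorem adj_c_cases {i : ℕ} {y : Raw} (h : (graph k).Adj (.c i) y) :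
    y = .p i 0 ∨ y = .b i ∨ (0 < i ∧ y = .cb (i - 1) 0) := by
  cases y <;> simp [graph, GkRel, Valid] at h ⊢ <;> omega

theorem adj_p_cases {i j : ℕ} (hj : 0 < j) (hjk : j < k) {y : Raw}
    (h : (graph k).Adj (.p i j) y) : y = .p i (j - 1) ∨ y = .p i (j + 1) := by
  cases y <;> simp [graph, GkRel, Valid] at h ⊢ <;> omega

theorem adj_r_cases {i : ℕ} {y : Raw} (h : (graph k).Adj (.p i k) y) :
    y = .p i (k - 1) ∨ y = .rp i 0 ∨ (0 < i ∧ y = .rp (i - 1) (k - 2)) := by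
  cases y <;> simp [graph, GkRel, Valid] at h ⊢ <;> omega

-- The connecting paths `r_i → r_{i+1}` and `c_{i+1} → b_i`, by distance from their first end.
def spinePath (k i j : ℕ) : Raw :=
  if j = 0 then .p i k else if j < k then .rp i (j - 1) else .p (i + 1) k

def crossPath (k i j : ℕ) : Raw :=
  if j = 0 then .c (i + 1) else if j ≤ k then .cb i (j - 1) else .b i

theorem adj_spinePath_cases {i j : ℕ} (hj : 0 < j) (hjk : j < k) {y : Raw}
    (h : (graph k).Adj (spinePath k i j) y) :
    y = spinePath k i (j - 1) ∨ y = spinePath k i (j + 1) := by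
  simp only [spinePath, if_neg hj.ne', if_pos hjk] at h ⊢
  cases y <;> simp [graph, GkRel, Valid] at h ⊢ <;> split_ifs <;> simp <;> omega

theorem adj_crossPath_cases {i j : ℕ} (hj : 0 < j) (hjk : j ≤ k) {y : Raw}
    (h : (graph k).Adj (crossPath k i j) y) :
    y = crossPath k i (j - 1) ∨ y = crossPath k i (j + 1) := by
  simp only [crossPath, if_neg hj.ne', if_pos hjk] at h ⊢
  cases y <;> simp [graph, GkRel, Valid] at h ⊢ <;> split_ifs <;> simp <;> omega

def level : Raw → ℕ
  | .b i | .c i | .p i _ => 2 * i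
  | .rp i _ | .cb i _ => 2 * i + 1

theorem adj_level_cross {T : ℕ} {x y : Raw} (h : (graph k).Adj x y) (hx : level x ≤ 2 * T)
    (hy : 2 * T < level y) : (x = .p T k ∧ y = .rp T 0) ∨ (x = .b T ∧ y = .cb T (k - 1)) := by
  cases x <;> cases y <;> simp [graph, GkRel, Valid, level] at h hx hy ⊢ <;> omega

def weight (k : ℕ) : Raw → ℕ
  | .b i => i * k
  | .c i => i * k + 1
  | .p i j => i * k + j
  | .rp i j => i * k + k + 1 + j
  | .cb i j => (i + 1) * k + j

theorem weight_mod_two_eq_iff (hk : 2 ≤ k) {x y : Raw} (h : GkRel k x y) :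
    weight k x % 2 = weight k y % 2 ↔ ∃ i, s(x, y) = s(.p i 0, .b i) := by
  rcases h with ⟨i, rfl, rfl⟩ | ⟨i, rfl, rfl⟩ | ⟨i, rfl, rfl⟩ | ⟨i, j, rfl, rfl⟩ | ⟨i, rfl, rfl⟩ |
    ⟨i, j, rfl, rfl⟩ | ⟨i, rfl, rfl⟩ | ⟨i, rfl, rfl⟩ | ⟨i, j, rfl, rfl⟩ | ⟨i, rfl, rfl⟩ <;>
  simp [weight, add_mul] <;> omega

theorem weight_eq_iff (hk : 2 ≤ k) {x y : Raw} (h : (graph k).Adj x y) :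
    (weight k x : ZMod 2) = weight k y ↔ ∃ i, s(x, y) = s(.p i 0, .b i) := by
  rw [ZMod.natCast_eq_natCast_iff']
  obtain ⟨-, ⟨-, -, h⟩ | ⟨-, -, h⟩⟩ := h
  · exact weight_mod_two_eq_iff hk h
  · rw [eq_comm, Sym2.eq_swap]
    exact weight_mod_two_eq_iff hk h

-- The cycle enters copy `l + 1` from below along both connecting paths.
def Climbs (H : (graph k).Subgraph) (l : ℕ) : Prop :=
  H.Adj (.rp l (k - 2)) (.p (l + 1) k) ∧ H.Adj (.cb l 0) (.c (l + 1))

theorem Climbs.lt {H : (graph k).Subgraph} {l : ℕ} (h : Climbs H l) : l + 1 < k :=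
  (valid_of_adj (H.adj_sub h.1)).1

section IsChordlessCycle

open Subgraph

variable {H : (graph k).Subgraph} (hH : H.IsChordlessCycle)
include hH

theorem valid_of_mem_verts {x : Raw} (hx : x ∈ H.verts) : Valid k x := by
  obtain ⟨y, hy⟩ := Set.nonempty_of_ncard_ne_zero (s := H.neighborSet x)
    (by rw [hH.ncard_neighborSet hx]; omega)
  exact valid_of_adj (H.adj_sub hy)

theorem pendant_adj {i j : ℕ} (hj : 0 < j) (hjk : j < k) (h : .p i j ∈ H.verts) :
    H.Adj (.p i 0) (.p i 1) ∧ H.Adj (.p i (k - 1)) (.p i k) := by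
  have hthread {m : ℕ} (hm : m < k) : H.Adj (.p i m) (.p i (m + 1)) :=
    hH.adj_of_thread (Raw.p i) (fun _ hj hjk _ hy => adj_p_cases hj hjk hy) hj hjk h hm
  refine ⟨hthread (by omega), ?_⟩
  simpa [Nat.sub_add_cancel (by omega : 1 ≤ k)] using hthread (m := k - 1) (by omega)

theorem spine_adj {i j : ℕ} (h : .rp i j ∈ H.verts) :
    H.Adj (.p i k) (.rp i 0) ∧ H.Adj (.rp i (k - 2)) (.p (i + 1) k) := by
  have hv : i + 1 < k ∧ j + 1 < k := valid_of_mem_verts hH h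
  have hthread {m : ℕ} (hm : m < k) : H.Adj (spinePath k i m) (spinePath k i (m + 1)) :=
    hH.adj_of_thread (spinePath k i) (fun _ hj hjk _ hy => adj_spinePath_cases hj hjk hy)
      (j := j + 1) (by omega) hv.2 (by simpa [spinePath, hv.2] using h) hm
  have h₀ := hthread (m := 0) (by omega)
  have h₁ := hthread (m := k - 1) (by omega)
  simp only [spinePath, Nat.sub_add_cancel (by omega : 1 ≤ k), if_pos (by omega : 1 < k),
    if_pos (by omega : k - 1 < k), if_neg (by omega : k - 1 ≠ 0), if_neg (by omega : k ≠ 0),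
    if_neg (lt_irrefl k), Nat.sub_sub] at h₀ h₁
  exact ⟨h₀, h₁⟩

theorem cross_adj {i j : ℕ} (h : .cb i j ∈ H.verts) :
    H.Adj (.c (i + 1)) (.cb i 0) ∧ H.Adj (.cb i (k - 1)) (.b i) := by
  have hv : i + 1 < k ∧ j < k := valid_of_mem_verts hH h
  have hthread {m : ℕ} (hm : m < k + 1) : H.Adj (crossPath k i m) (crossPath k i (m + 1)) :=
    hH.adj_of_thread (crossPath k i) (fun _ hj hjk _ hy => adj_crossPath_cases hj (by omega) hy)
      (j := j + 1) (by omega) (by omega) (by simpa [crossPath, hv.2] using h) hm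
  have h₀ := hthread (m := 0) (by omega)
  have h₁ := hthread (m := k) (by omega)
  simp only [crossPath, if_pos (by omega : 1 ≤ k), if_neg (by omega : k ≠ 0), if_pos le_rfl,
    if_neg (by omega : k + 1 ≠ 0), if_neg (by omega : ¬ k + 1 ≤ k)] at h₀ h₁
  exact ⟨h₀, h₁⟩

theorem adj_c_of_lowest {i : ℕ} (hc : .c i ∈ H.verts) (hlow : ∀ y ∈ H.verts, 2 * i ≤ level y) :
    H.Adj (.c i) (.p i 0) ∧ H.Adj (.c i) (.b i) := by
  refine hH.adj_and_adj hc fun y hy => ?_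
  rcases adj_c_cases (H.adj_sub hy) with rfl | rfl | ⟨hi, rfl⟩
  · exact .inl rfl
  · exact .inr rfl
  · have := hlow _ hy.snd_mem
    simp only [level] at this
    omega

theorem adj_r_of_lowest {i : ℕ} (hr : .p i k ∈ H.verts) (hlow : ∀ y ∈ H.verts, 2 * i ≤ level y) :
    H.Adj (.p i k) (.p i (k - 1)) ∧ H.Adj (.p i k) (.rp i 0) := by
  refine hH.adj_and_adj hr fun y hy => ?_
  rcases adj_r_cases (H.adj_sub hy) with rfl | rfl | ⟨hi, rfl⟩
  · exact .inl rfl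
  · exact .inr rfl
  · have := hlow _ hy.snd_mem
    simp only [level] at this
    omega

theorem exists_a_mem_of_lowest (hk : 2 ≤ k) {x : Raw} (hx : x ∈ H.verts)
    (hlow : ∀ y ∈ H.verts, level x ≤ level y) :
    ∃ i, .p i 0 ∈ H.verts ∧ ∀ y ∈ H.verts, 2 * i ≤ level y := by
  cases x with
  | b i =>
    refine ⟨i, ?_, hlow⟩
    by_cases hc : .c i ∈ H.verts
    · exact (adj_c_of_lowest hH hc hlow).1.snd_mem
    · refine (hH.adj_and_adj hx (w := .cb i (k - 1)) fun y hy => ?_).1.snd_mem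
      rcases adj_b_cases (H.adj_sub hy) with rfl | rfl | rfl
      · exact .inl rfl
      · exact absurd hy.snd_mem hc
      · exact .inr rfl
  | c i => exact ⟨i, (adj_c_of_lowest hH hx hlow).1.snd_mem, hlow⟩
  | p i j =>
    refine ⟨i, ?_, hlow⟩
    have hj : i < k ∧ j ≤ k := valid_of_mem_verts hH hx
    rcases Nat.eq_zero_or_pos j with rfl | hj0
    · exact hx
    rcases hj.2.lt_or_eq with hjk | rfl
    · exact (pendant_adj hH hj0 hjk hx).1.fst_mem
    · have hpend := (adj_r_of_lowest hH hx hlow).1.snd_mem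
      exact (pendant_adj hH (by omega) (by omega) hpend).1.fst_mem
  | rp i j =>
    have := hlow _ (spine_adj hH hx).1.fst_mem
    simp only [level] at this
    omega
  | cb i j =>
    have := hlow _ (cross_adj hH hx).2.snd_mem
    simp only [level] at this
    omega

theorem climbs_bottom (hk : 2 ≤ k) {i : ℕ} (ha : .p i 0 ∈ H.verts) (hc : .c i ∉ H.verts)
    (hlow : ∀ y ∈ H.verts, 2 * i ≤ level y) : H.Adj (.p i 0) (.b i) ∧ Climbs H i := by
  have hab := hH.adj_and_adj ha (u := .b i) (w := .p i 1) fun y hy => by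
    rcases adj_a_cases (H.adj_sub hy) with rfl | rfl | rfl
    · exact .inl rfl
    · exact absurd hy.snd_mem hc
    · exact .inr rfl
  have hr := (pendant_adj hH one_pos (by omega) hab.2.snd_mem).2.snd_mem
  have hb := hH.adj_and_adj hab.1.snd_mem (u := .p i 0) (w := .cb i (k - 1)) fun y hy => by
    rcases adj_b_cases (H.adj_sub hy) with rfl | rfl | rfl
    · exact .inl rfl
    · exact absurd hy.snd_mem hc
    · exact .inr rfl
  exact ⟨hab.1, (spine_adj hH (adj_r_of_lowest hH hr hlow).2.snd_mem).2,
    (cross_adj hH hb.2.snd_mem).1.symm⟩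

theorem climbs_succ (hk : 2 ≤ k) {l : ℕ} (hl : Climbs H l) (ha : .p (l + 1) 0 ∉ H.verts) :
    Climbs H (l + 1) := by
  have hr := hH.adj_and_adj hl.1.snd_mem (u := .rp (l + 1) 0) (w := .rp l (k - 2))
    fun y hy => by
      rcases adj_r_cases (H.adj_sub hy) with rfl | rfl | ⟨-, rfl⟩
      · exact absurd (pendant_adj hH (by omega) (by omega) hy.snd_mem).1.fst_mem ha
      · exact .inl rfl
      · exact .inr rfl
  have hc := hH.adj_and_adj hl.2.snd_mem (u := .b (l + 1)) (w := .cb l 0) fun y hy => by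
    rcases adj_c_cases (H.adj_sub hy) with rfl | rfl | ⟨-, rfl⟩
    · exact absurd hy.snd_mem ha
    · exact .inl rfl
    · exact .inr rfl
  have hb := hH.adj_and_adj hc.1.snd_mem (u := .c (l + 1)) (w := .cb (l + 1) (k - 1))
    fun y hy => by
      rcases adj_b_cases (H.adj_sub hy) with rfl | rfl | rfl
      · exact absurd hy.snd_mem ha
      · exact .inl rfl
      · exact .inr rfl
  exact ⟨(spine_adj hH hr.1.snd_mem).2, (cross_adj hH hb.2.snd_mem).1.symm⟩

theorem climbs_top (hk : 2 ≤ k) {t : ℕ} (ht : Climbs H t) (ha : .p (t + 1) 0 ∈ H.verts) :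
    .b (t + 1) ∉ H.verts ∧ ∀ y ∈ H.verts, level y ≤ 2 * (t + 1) := by
  have hc := ht.2.snd_mem
  have htri := triangle_adj (k := k) ht.lt
  have hca := hH.isInduced hc ha htri.2.2.symm
  have hb : .b (t + 1) ∉ H.verts := fun hb => by
    rcases hH.eq_or_eq_of_adj ht.2.symm hca (by simp) (hH.isInduced hc hb htri.2.1.symm)
      with h | h <;> simp at h
  have hp := hH.adj_and_adj ha (u := .c (t + 1)) (w := .p (t + 1) 1) fun y hy => by
    rcases adj_a_cases (H.adj_sub hy) with rfl | rfl | rfl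
    · exact absurd hy.snd_mem hb
    · exact .inl rfl
    · exact .inr rfl
  have hr := (pendant_adj hH one_pos (by omega) hp.2.snd_mem).2
  refine ⟨hb, fun y hy => hH.connected.mem_of_adj_closed (S := {y | level y ≤ 2 * (t + 1)})
    ?_ ha hy (by simp [level])⟩
  intro x y hxy hx
  by_contra hy
  rcases adj_level_cross (H.adj_sub hxy) hx (not_le.mp hy) with ⟨rfl, rfl⟩ | ⟨rfl, -⟩
  · rcases hH.eq_or_eq_of_adj ht.1.symm hr.symm (by simp) hxy with h | h <;> simp at h
  · exact hb hxy.fst_mem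

theorem existsUnique_adj_a_b (hk : 2 ≤ k) (hne : H.verts.Nonempty) :
    ∃ i, ∀ j, H.Adj (.p j 0) (.b j) ↔ j = i := by
  obtain ⟨x, hx, hmin⟩ := (measure level).wf.has_min H.verts hne
  obtain ⟨i, ha, hlow⟩ := exists_a_mem_of_lowest hH hk hx fun y hy => not_lt.mp (hmin y hy)
  have htri := triangle_adj (k := k) (valid_of_mem_verts hH ha).1
  by_cases hc : .c i ∈ H.verts
  · have hb := (adj_c_of_lowest hH hc hlow).2.snd_mem
    have hsub := hH.verts_subset_of_adj ha hb hc htri.1 htri.2.1 htri.2.2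
    refine ⟨i, fun j => ⟨fun hj => ?_, ?_⟩⟩
    · rcases hsub hj.fst_mem with h | h | h <;> simp_all
    · rintro rfl
      exact hH.isInduced ha hb htri.1
  · obtain ⟨hab, hcl⟩ := climbs_bottom hH hk ha hc hlow
    obtain ⟨t, hit, hclt, hat, hbelow⟩ :=
      Nat.exists_first_of_step (Q := fun l => .p (l + 1) 0 ∈ H.verts) hcl
        (fun _ hl ha => climbs_succ hH hk hl ha) fun _ hl => Nat.lt_of_succ_lt hl.lt
    obtain ⟨hb, hlevel⟩ := climbs_top hH hk hclt hat
    refine ⟨i, fun j => ⟨fun hj => ?_, by rintro rfl; exact hab⟩⟩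
    have h₁ := hlow _ hj.fst_mem
    have h₂ := hlevel _ hj.fst_mem
    simp only [level] at h₁ h₂
    by_contra hji
    rcases (show j = t + 1 ∨ j ≤ t by omega) with rfl | hjt
    · exact hb hj.snd_mem
    · exact hbelow (j - 1) (by omega) (by omega)
        (by rw [Nat.sub_add_cancel (by omega)]; exact hj.fst_mem)

end IsChordlessCycle

theorem odd_length_of_isInducedCycle (hk : 2 ≤ k) {v : Raw} {C : (graph k).Walk v v}
    (hC : IsInducedCycle (graph k) C) : Odd C.length := by
  obtain ⟨i, hi⟩ := existsUnique_adj_a_b hC.isChordlessCycle_toSubgraph hk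
    ⟨v, C.start_mem_verts_toSubgraph⟩
  have hmono (d) (hd : d ∈ C.darts) :
      (weight k d.fst : ZMod 2) = weight k d.snd ↔ d.edge = s(.p i 0, .b i) := by
    rw [weight_eq_iff hk d.adj]
    refine ⟨fun ⟨j, hj⟩ => ?_, fun h => ⟨i, h⟩⟩
    have hdE : d.edge ∈ C.edges := List.mem_map_of_mem hd
    rw [Dart.edge, hj, ← Walk.adj_toSubgraph_iff_mem_edges, hi] at hdE
    rwa [← hdE]
  have hcount : C.darts.countP (fun d => (weight k d.fst : ZMod 2) = weight k d.snd) = 1 := by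
    calc _ = C.darts.countP (fun d => d.edge == s(.p i 0, .b i)) :=
          List.countP_congr fun d hd => by simpa using hmono d hd
      _ = C.edges.count s(.p i 0, .b i) := by rw [Walk.edges, List.count, List.countP_map]; rfl
      _ = 1 := List.count_eq_one_of_mem hC.1.edges_nodup
          (Walk.adj_toSubgraph_iff_mem_edges.mp ((hi i).mpr rfl))
  rw [← ZMod.natCast_eq_one_iff_odd, Walk.natCast_length_eq (fun x => (weight k x : ZMod 2)) C,
    hcount, CharTwo.add_self_eq_zero, zero_add, Nat.cast_one]

end Raw

/-- for every `k ≥ 4`, the graph `G_k` contains no induced cycle of even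
length. -/
theorem Gk_no_even_hole (k : ℕ) (hk : 4 ≤ k) :
    ∀ (v : Vk k) (cyc : (Gk k).Walk v v), IsInducedCycle (Gk k) cyc →
      ¬ Even cyc.length := by
  intro v cyc hcyc
  rw [Nat.not_even_iff_odd, ← cyc.length_map (Raw.embedding k).toHom]
  exact Raw.odd_length_of_isInducedCycle (by omega) (hcyc.map (Raw.embedding k))
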